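/- arXiv:1001.2059 — 4 statements merged into one kernel-verified Lean document; each statement's English description precedes it below -/
import Mathlib

section
/- Let F be a finite field, let N, T, n be positive integers, and let ρ, τ be natural numbers. Let 𝓧 be a nonempty set of n-tuples of N×T matrices over F such that for every pair of distinct codewords X = (X_0,…,X_{n−1}) and X′ = (X′_0,…,X′_{n−1}) in 𝓧 one has Σ_{j=0}^{n−1} d_S(⟨X_j⟩, ⟨X′_j⟩) > 2(ρ + 2τ). Then 𝓧 is (ρ,τ)-correcting: for any codewords X, X′ ∈ 𝓧, any N×N matrices A_0,…,A_{n−1} and A′_0,…,A′_{n−1} over F with Σ_j (N − rank A_j) ≤ ρ and Σ_j (N − rank A′_j) ≤ ρ, and any N×T matrices Z_0,…,Z_{n−1} and Z′_0,…,Z′_{n−1} over F with Σ_j rank Z_j ≤ τ and Σ_j rank Z′_j ≤ τ, if A_j X_j + Z_j = A′_j X′_j + Z′_j for all j = 0,…,n−1, then X = X′. -/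
set_option synthInstance.maxHeartbeats 1000000
set_option maxHeartbeats 1000000


/-- The row space of a matrix: the subspace spanned by its rows. -/
noncomputable def rowSpace {F : Type*} [Field F] {m k : Type*} (X : Matrix m k F) :
    Submodule F (k → F) :=
  Submodule.span F (Set.range X)

/-- The subspace distance `d_S(U,V) = dim(U + V) - dim(U ∩ V)`. -/
noncomputable def subspaceDist {F : Type*} [Field F] {k : Type*}
    (U V : Submodule F (k → F)) : ℕ :=
  Module.finrank F ↥(U ⊔ V) - Module.finrank F ↥(U ⊓ V)

section Aux

open Matrix Submodule Module

variable {F : Type*} [Field F] {k : Type*} [Fintype k]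

lemma subspaceDist_key (U V : Submodule F (k → F)) :
    subspaceDist U V + (finrank F U + finrank F V) = 2 * finrank F ↥(U ⊔ V) := by
  have h := Submodule.finrank_sup_add_finrank_inf_eq U V
  have hle : finrank F ↥(U ⊓ V) ≤ finrank F ↥(U ⊔ V) :=
    Submodule.finrank_mono (le_trans inf_le_left le_sup_left)
  unfold subspaceDist
  omega

lemma subspaceDist_comm (U V : Submodule F (k → F)) :
    subspaceDist U V = subspaceDist V U := by
  unfold subspaceDist
  rw [sup_comm, inf_comm]

lemma subspaceDist_triangle (U W V : Submodule F (k → F)) :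
    subspaceDist U V ≤ subspaceDist U W + subspaceDist W V := by
  have h1 := subspaceDist_key U V
  have h2 := subspaceDist_key U W
  have h3 := subspaceDist_key W V
  have hkey : finrank F ↥(U ⊔ V) + finrank F W
      ≤ finrank F ↥(U ⊔ W) + finrank F ↥(W ⊔ V) := by
    have h4 := Submodule.finrank_sup_add_finrank_inf_eq (U ⊔ W) (W ⊔ V)
    have h5 : finrank F ↥(U ⊔ V) ≤ finrank F ↥((U ⊔ W) ⊔ (W ⊔ V)) :=
      Submodule.finrank_mono (sup_le (le_trans le_sup_left le_sup_left)
        (le_trans le_sup_right le_sup_right))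
    have h6 : finrank F ↥W ≤ finrank F ↥((U ⊔ W) ⊓ (W ⊔ V)) :=
      Submodule.finrank_mono (le_inf le_sup_right le_sup_left)
    omega
  omega

lemma subspaceDist_of_le {U W : Submodule F (k → F)} (h : W ≤ U) :
    subspaceDist U W = finrank F U - finrank F W := by
  unfold subspaceDist
  rw [sup_eq_left.mpr h, inf_eq_right.mpr h]

lemma finrank_sup_le (U V : Submodule F (k → F)) :
    finrank F ↥(U ⊔ V) ≤ finrank F U + finrank F V := by
  have h := Submodule.finrank_sup_add_finrank_inf_eq U V
  omega

/-- If `W` and `V` differ by a subspace `S`, then their distance is at most `2 dim S`. -/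
lemma subspaceDist_le_of_noise {W V S : Submodule F (k → F)}
    (h1 : W ≤ V ⊔ S) (h2 : V ≤ W ⊔ S) :
    subspaceDist W V ≤ 2 * finrank F S := by
  have hkey := subspaceDist_key W V
  have ha : finrank F ↥(W ⊔ V) ≤ finrank F W + finrank F S :=
    le_trans (Submodule.finrank_mono (sup_le le_sup_left h2)) (finrank_sup_le W S)
  have hb : finrank F ↥(W ⊔ V) ≤ finrank F V + finrank F S :=
    le_trans (Submodule.finrank_mono (sup_le h1 le_sup_left)) (finrank_sup_le V S)
  omega

variable {N T : ℕ}

lemma rowSpace_eq_range {M' : ℕ} (X : Matrix (Fin N) (Fin M') F) :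
    rowSpace X = LinearMap.range X.vecMulLinear :=
  (range_vecMulLinear X).symm

lemma rowSpace_add_le (M M' : Matrix (Fin N) (Fin T) F) :
    rowSpace (M + M') ≤ rowSpace M ⊔ rowSpace M' := by
  refine Submodule.span_le.mpr ?_
  rintro _ ⟨i, rfl⟩
  have : (M + M') i = M i + M' i := rfl
  rw [this]
  exact Submodule.add_mem_sup (Submodule.subset_span ⟨i, rfl⟩)
    (Submodule.subset_span ⟨i, rfl⟩)

lemma rowSpace_neg (M : Matrix (Fin N) (Fin T) F) :
    rowSpace (-M) = rowSpace M := by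
  unfold rowSpace
  apply le_antisymm
  · refine Submodule.span_le.mpr ?_
    rintro _ ⟨i, rfl⟩
    have : (-M) i = -(M i) := rfl
    rw [this]
    exact neg_mem (Submodule.subset_span ⟨i, rfl⟩)
  · refine Submodule.span_le.mpr ?_
    rintro _ ⟨i, rfl⟩
    have : M i = -((-M) i) := by ext j; simp
    rw [this]
    exact neg_mem (Submodule.subset_span ⟨i, rfl⟩)

lemma vecMulLinear_mul (A : Matrix (Fin N) (Fin N) F) (X : Matrix (Fin N) (Fin T) F) :
    (A * X).vecMulLinear = X.vecMulLinear.comp A.vecMulLinear :=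
  LinearMap.ext fun v => (Matrix.vecMul_vecMul v A X).symm

lemma rowSpace_mul (A : Matrix (Fin N) (Fin N) F) (X : Matrix (Fin N) (Fin T) F) :
    rowSpace (A * X) = Submodule.map X.vecMulLinear (rowSpace A) := by
  rw [rowSpace_eq_range, vecMulLinear_mul, LinearMap.range_comp, rowSpace_eq_range A]

lemma rowSpace_mul_le (A : Matrix (Fin N) (Fin N) F) (X : Matrix (Fin N) (Fin T) F) :
    rowSpace (A * X) ≤ rowSpace X := by
  rw [rowSpace_mul, rowSpace_eq_range X]
  rintro y hy
  obtain ⟨v, -, rfl⟩ := Submodule.mem_map.mp hy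
  exact LinearMap.mem_range.mpr ⟨v, rfl⟩

lemma rank_eq_finrank_rowSpace {M' : ℕ} (M : Matrix (Fin N) (Fin M') F) :
    M.rank = finrank F (rowSpace M) :=
  M.rank_eq_finrank_span_row

lemma finrank_rowSpace_le_mul (A : Matrix (Fin N) (Fin N) F) (X : Matrix (Fin N) (Fin T) F) :
    finrank F (rowSpace X) ≤ finrank F (rowSpace (A * X)) + (N - A.rank) := by
  obtain ⟨C, hC⟩ := Submodule.exists_isCompl (rowSpace A)
  have hCrank : finrank F (rowSpace A) + finrank F C = N := by
    have := Submodule.finrank_add_eq_of_isCompl hC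
    simpa using this
  have hmap : rowSpace X = Submodule.map X.vecMulLinear (rowSpace A) ⊔
      Submodule.map X.vecMulLinear C := by
    rw [← Submodule.map_sup, hC.sup_eq_top, rowSpace_eq_range, Submodule.map_top]
  rw [hmap, ← rowSpace_mul]
  calc finrank F ↥(rowSpace (A * X) ⊔ Submodule.map X.vecMulLinear C)
      ≤ finrank F (rowSpace (A * X)) + finrank F (Submodule.map X.vecMulLinear C) :=
        finrank_sup_le _ _
    _ ≤ finrank F (rowSpace (A * X)) + finrank F C :=
        Nat.add_le_add_left (Submodule.finrank_map_le _ _) _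
    _ ≤ finrank F (rowSpace (A * X)) + (N - A.rank) := by
        have hr := rank_eq_finrank_rowSpace A
        omega

/-- The distance from the row space of `X` to the row space of the channel output. -/
lemma subspaceDist_output (A : Matrix (Fin N) (Fin N) F) (X Z : Matrix (Fin N) (Fin T) F) :
    subspaceDist (rowSpace X) (rowSpace (A * X + Z)) ≤ (N - A.rank) + 2 * Z.rank := by
  have t := subspaceDist_triangle (rowSpace X) (rowSpace (A * X)) (rowSpace (A * X + Z))
  have h1 : subspaceDist (rowSpace X) (rowSpace (A * X)) ≤ N - A.rank := by
    rw [subspaceDist_of_le (rowSpace_mul_le A X)]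
    have := finrank_rowSpace_le_mul A X
    omega
  have h2 : subspaceDist (rowSpace (A * X)) (rowSpace (A * X + Z)) ≤ 2 * Z.rank := by
    rw [rank_eq_finrank_rowSpace]
    apply subspaceDist_le_of_noise
    · have : A * X = (A * X + Z) + (-Z) := by abel
      calc rowSpace (A * X) = rowSpace ((A * X + Z) + (-Z)) := by rw [← this]
        _ ≤ rowSpace (A * X + Z) ⊔ rowSpace (-Z) := rowSpace_add_le _ _
        _ = rowSpace (A * X + Z) ⊔ rowSpace Z := by rw [rowSpace_neg]
    · exact rowSpace_add_le _ _
  omega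

lemma shot_bound {A A' : Matrix (Fin N) (Fin N) F} {X X' Z Z' : Matrix (Fin N) (Fin T) F}
    (h : A * X + Z = A' * X' + Z') :
    subspaceDist (rowSpace X) (rowSpace X')
      ≤ ((N - A.rank) + 2 * Z.rank) + ((N - A'.rank) + 2 * Z'.rank) := by
  have t := subspaceDist_triangle (rowSpace X) (rowSpace (A * X + Z)) (rowSpace X')
  have h1 := subspaceDist_output A X Z
  have h2 : subspaceDist (rowSpace (A * X + Z)) (rowSpace X')
      ≤ (N - A'.rank) + 2 * Z'.rank := by
    rw [h, subspaceDist_comm]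
    exact subspaceDist_output A' X' Z'
  omega

end Aux

/-- A multishot matrix code whose minimum extended subspace distance exceeds
`2(ρ + 2τ)` is `(ρ,τ)`-correcting. -/
theorem multishot_code_correcting
    {F : Type*} [Field F] [Fintype F] (N T n : ℕ) (hN : 0 < N) (hT : 0 < T) (hn : 0 < n)
    (ρ τ : ℕ)
    (𝓧 : Set (Fin n → Matrix (Fin N) (Fin T) F)) (h𝓧 : 𝓧.Nonempty)
    (hdist : ∀ X ∈ 𝓧, ∀ X' ∈ 𝓧, X ≠ X' →
      2 * (ρ + 2 * τ) < ∑ j : Fin n, subspaceDist (rowSpace (X j)) (rowSpace (X' j)))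
    (X X' : Fin n → Matrix (Fin N) (Fin T) F) (hX : X ∈ 𝓧) (hX' : X' ∈ 𝓧)
    (A A' : Fin n → Matrix (Fin N) (Fin N) F)
    (hA : ∑ j : Fin n, (N - (A j).rank) ≤ ρ)
    (hA' : ∑ j : Fin n, (N - (A' j).rank) ≤ ρ)
    (Z Z' : Fin n → Matrix (Fin N) (Fin T) F)
    (hZ : ∑ j : Fin n, (Z j).rank ≤ τ)
    (hZ' : ∑ j : Fin n, (Z' j).rank ≤ τ)
    (heq : ∀ j : Fin n, A j * X j + Z j = A' j * X' j + Z' j) :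
    X = X' := by
  by_contra hne
  have hlt := hdist X hX X' hX' hne
  have hsum : ∑ j : Fin n, subspaceDist (rowSpace (X j)) (rowSpace (X' j))
      ≤ ∑ j : Fin n, (((N - (A j).rank) + 2 * (Z j).rank)
        + ((N - (A' j).rank) + 2 * (Z' j).rank)) :=
    Finset.sum_le_sum fun j _ => shot_bound (heq j)
  rw [Finset.sum_add_distrib, Finset.sum_add_distrib, Finset.sum_add_distrib,
    ← Finset.mul_sum, ← Finset.mul_sum] at hsum
  omega
end

section
/- Let F be a field and N, T positive integers. For any N×T matrices M and Z over F, the subspace distance between the row space of M and the row space of M + Z satisfies d_S(⟨M⟩, ⟨M+Z⟩) ≤ 2 rank Z. -/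
/-- Adding an error matrix `Z` moves the row space by at most `2 rank Z` in
subspace distance: `d_S(⟨M⟩, ⟨M+Z⟩) ≤ 2 rank Z`. -/
theorem subspaceDist_add_le_two_rank
    {F : Type*} [Field F] (N T : ℕ) (hN : 0 < N) (hT : 0 < T)
    (M Z : Matrix (Fin N) (Fin T) F) :
    subspaceDist (rowSpace M) (rowSpace (M + Z)) ≤ 2 * Z.rank := by
  set U := rowSpace M
  set V := rowSpace (M + Z)
  set W := rowSpace Z
  have hrow : ∀ (X : Matrix (Fin N) (Fin T) F) (i : Fin N), X i ∈ rowSpace X :=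
    fun X i => Submodule.subset_span ⟨i, rfl⟩
  have hVUW : V ≤ U ⊔ W := by
    refine Submodule.span_le.mpr ?_
    rintro _ ⟨i, rfl⟩
    have : (M + Z) i = M i + Z i := rfl
    rw [SetLike.mem_coe, this]
    exact Submodule.add_mem _ (Submodule.mem_sup_left (hrow M i))
      (Submodule.mem_sup_right (hrow Z i))
  have hUVW : U ≤ V ⊔ W := by
    refine Submodule.span_le.mpr ?_
    rintro _ ⟨i, rfl⟩
    have : M i = (M + Z) i + (-1 : F) • Z i := by
      funext j; simp [Matrix.add_apply]
    rw [SetLike.mem_coe, this]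
    exact Submodule.add_mem _ (Submodule.mem_sup_left (hrow (M + Z) i))
      (Submodule.mem_sup_right (Submodule.smul_mem _ _ (hrow Z i)))
  have key : ∀ (A B : Submodule F (Fin T → F)),
      Module.finrank F ↥(A ⊔ B) ≤ Module.finrank F ↥A + Module.finrank F ↥B := by
    intro A B
    have := Submodule.finrank_sup_add_finrank_inf_eq A B
    omega
  have h1 : Module.finrank F ↥(U ⊔ V) ≤ Module.finrank F ↥U + Module.finrank F ↥W := by
    calc Module.finrank F ↥(U ⊔ V) ≤ Module.finrank F ↥(U ⊔ W) :=
          Submodule.finrank_mono (sup_le le_sup_left hVUW)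
      _ ≤ _ := key U W
  have h2 : Module.finrank F ↥(U ⊔ V) ≤ Module.finrank F ↥V + Module.finrank F ↥W := by
    calc Module.finrank F ↥(U ⊔ V) ≤ Module.finrank F ↥(V ⊔ W) :=
          sup_le hUVW le_sup_left |> Submodule.finrank_mono
      _ ≤ _ := key V W
  have heq := Submodule.finrank_sup_add_finrank_inf_eq U V
  have hW : Z.rank = Module.finrank F ↥W := Matrix.rank_eq_finrank_span_row Z
  rw [subspaceDist, hW]
  omega
end

section
/- Let F be a field and N, M positive integers, and let T = N + M. For any N×M matrices U and V over F, the subspace distance between the row space of the lifting [I|U] and the row space of the lifting [I|V] equals twice the rank distance between U and V: d_S(⟨[I|U]⟩, ⟨[I|V]⟩) = 2 rank(V − U). -/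
/-- The lifting `[I | U]` of an `N × M` matrix `U`: the `N × (N + M)` matrix obtained
by juxtaposing the `N × N` identity matrix and `U`. -/
def lifting {F : Type*} [Field F] {N M : ℕ} (U : Matrix (Fin N) (Fin M) F) :
    Matrix (Fin N) (Fin (N + M)) F :=
  (Matrix.fromCols (1 : Matrix (Fin N) (Fin N) F) U).submatrix id finSumFinEquiv.symm

/-! The identity block of `[I|W]` recovers `x` from `x [I|W]`, so a vector lies in both row
spaces exactly when it is `x [I|U]` with `x (V - U) = 0`. Hence the intersection has dimension
`N - rank (V - U)`, both row spaces have dimension `N`, and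
`d_S(A, B) = dim A + dim B - 2 dim (A ∩ B)`. -/

open Matrix Module

lemma subspaceDist_add_two_mul_finrank_inf {F : Type*} [Field F] {k : Type*} [Finite k]
    (U V : Submodule F (k → F)) :
    subspaceDist U V + 2 * finrank F ↥(U ⊓ V) = finrank F U + finrank F V := by
  have hle : finrank F ↥(U ⊓ V) ≤ finrank F ↥(U ⊔ V) :=
    Submodule.finrank_mono (inf_le_left.trans le_sup_left)
  have := Submodule.finrank_sup_add_finrank_inf_eq U V
  unfold subspaceDist
  omega

lemma rowSpace_eq_range_vecMulLinear {F : Type*} [Field F] {m k : Type*} [Fintype m]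
    (X : Matrix m k F) : rowSpace X = LinearMap.range X.vecMulLinear :=
  (range_vecMulLinear X).symm

lemma finrank_ker_vecMulLinear {F : Type*} [Field F] {m k : Type*} [Fintype m] [Fintype k]
    (A : Matrix m k F) : finrank F (LinearMap.ker A.vecMulLinear) = Fintype.card m - A.rank := by
  have h := LinearMap.finrank_range_add_finrank_ker A.vecMulLinear
  rw [range_vecMulLinear, ← rank_eq_finrank_span_row, finrank_fintype_fun_eq_card] at h
  omega

section Lifting

variable {F : Type*} [Field F] {N M : ℕ}

lemma vecMul_lifting (W : Matrix (Fin N) (Fin M) F) (x : Fin N → F) :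
    x ᵥ* lifting W = (x ⊕ᵥ x ᵥ* W) ∘ finSumFinEquiv.symm := by
  change (x ᵥ* fromCols 1 W) ∘ finSumFinEquiv.symm = _
  rw [vecMul_fromCols, vecMul_one]

lemma vecMul_lifting_eq_vecMul_lifting_iff (W W' : Matrix (Fin N) (Fin M) F) (x y : Fin N → F) :
    x ᵥ* lifting W = y ᵥ* lifting W' ↔ x = y ∧ x ᵥ* W = y ᵥ* W' := by
  rw [vecMul_lifting, vecMul_lifting, finSumFinEquiv.symm.surjective.injective_comp_right.eq_iff,
    Sum.elim_eq_iff]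

lemma vecMulLinear_lifting_injective (W : Matrix (Fin N) (Fin M) F) :
    Function.Injective (lifting W).vecMulLinear := fun x y hxy =>
  ((vecMul_lifting_eq_vecMul_lifting_iff W W x y).1 hxy).1

lemma finrank_rowSpace_lifting (W : Matrix (Fin N) (Fin M) F) :
    finrank F (rowSpace (lifting W)) = N := by
  rw [rowSpace_eq_range_vecMulLinear, LinearMap.finrank_range_of_inj
    (vecMulLinear_lifting_injective W), finrank_fin_fun]

lemma rowSpace_lifting_inf_rowSpace_lifting (U V : Matrix (Fin N) (Fin M) F) :
    rowSpace (lifting U) ⊓ rowSpace (lifting V) =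
      (LinearMap.ker (V - U).vecMulLinear).map (lifting U).vecMulLinear := by
  ext z
  simp only [rowSpace_eq_range_vecMulLinear, Submodule.mem_inf, LinearMap.mem_range,
    Submodule.mem_map, LinearMap.mem_ker, vecMulLinear_apply, vecMul_sub, sub_eq_zero]
  constructor
  · rintro ⟨⟨x, rfl⟩, y, hyx⟩
    obtain ⟨rfl, hUV⟩ := (vecMul_lifting_eq_vecMul_lifting_iff V U _ _).1 hyx
    exact ⟨y, hUV, rfl⟩
  · rintro ⟨x, hUV, rfl⟩
    exact ⟨⟨x, rfl⟩, x, (vecMul_lifting_eq_vecMul_lifting_iff V U x x).2 ⟨rfl, hUV⟩⟩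

lemma finrank_rowSpace_lifting_inf_rowSpace_lifting (U V : Matrix (Fin N) (Fin M) F) :
    finrank F ↥(rowSpace (lifting U) ⊓ rowSpace (lifting V)) = N - (V - U).rank := by
  rw [rowSpace_lifting_inf_rowSpace_lifting,
    ← (Submodule.equivMapOfInjective _ (vecMulLinear_lifting_injective U) _).finrank_eq,
    finrank_ker_vecMulLinear, Fintype.card_fin]

end Lifting

theorem subspaceDist_lifting_eq_two_rankDist_general
    {F : Type*} [Field F] (N M : ℕ)
    (U V : Matrix (Fin N) (Fin M) F) :
    subspaceDist (rowSpace (lifting U)) (rowSpace (lifting V)) = 2 * (V - U).rank := by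
  have h := subspaceDist_add_two_mul_finrank_inf (rowSpace (lifting U)) (rowSpace (lifting V))
  rw [finrank_rowSpace_lifting, finrank_rowSpace_lifting,
    finrank_rowSpace_lifting_inf_rowSpace_lifting] at h
  have := (V - U).rank_le_height
  omega

/-- The subspace distance between the row spaces of two liftings equals twice the
rank distance: `d_S(⟨[I|U]⟩, ⟨[I|V]⟩) = 2 rank(V - U)`. -/
theorem subspaceDist_lifting_eq_two_rankDist
    {F : Type*} [Field F] (N M : ℕ) (hN : 0 < N) (hM : 0 < M)
    (U V : Matrix (Fin N) (Fin M) F) :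
    subspaceDist (rowSpace (lifting U)) (rowSpace (lifting V)) = 2 * (V - U).rank :=
  subspaceDist_lifting_eq_two_rankDist_general N M U V
end

section
/- Let F ⊆ L be finite fields with [L:F] finite, and let N, K, n, m be positive integers. Let G be an N×K matrix over L with linearly independent columns, and let K = K_0 > K_1 > … > K_m = 0. For 0 ≤ i ≤ m let ℛ_i be the span of the first K_i columns of G, and for 0 ≤ i < m let G_i be the N×(K_i − K_{i+1}) submatrix of G consisting of columns K_{i+1} through K_i − 1. For 0 ≤ i < m, assume every nonzero element of ℛ_i has rank weight at least D_i, and let ℋ_i be a set of n-tuples of vectors in L^{K_i − K_{i+1}} whose minimum Hamming distance (number of coordinates j in which two tuples differ) is at least h_i. For message tuples 𝐦 = (𝐦^{(0)},…,𝐦^{(m−1)}) with 𝐦^{(i)} = (𝐦^{(i)}_0,…,𝐦^{(i)}_{n−1}) ∈ ℋ_i, define the encoded word u(𝐦) = (u_0,…,u_{n−1}) ∈ (L^N)^n by u_j = Σ_{i=0}^{m−1} G_i · 𝐦^{(i)}_j. Then for any two distinct message tuples 𝐦 ≠ 𝐦′, the extended rank distance of the encoded words satisfies Σ_{j=0}^{n−1}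 d_R(u(𝐦)_j, u(𝐦′)_j) ≥ min{D_i · h_i : 0 ≤ i < m}. -/
open Matrix
open scoped Classical

/-- The rank weight of a vector `u ∈ L^N` over the subfield `F`:
`wt(u) = dim_F(span_F {u_1, …, u_N})`. -/
noncomputable def rankWeight (F : Type*) {L : Type*} [Field F] [Field L] [Algebra F L]
    {N : ℕ} (u : Fin N → L) : ℕ :=
  Module.finrank F ↥(Submodule.span F (Set.range u))

/-- Encoding map of the multilevel (generalized concatenated) construction: the `j`-th
coordinate of the codeword is `u_j = Σ_i G_i ⬝ 𝐦_j^{(i)}`, where `G_i` is the submatrix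
of `G` consisting of columns `K_{i+1}` through `K_i - 1`. -/
def multilevelEncode {L : Type*} [Field L] {N K n m : ℕ}
    (G : Matrix (Fin N) (Fin K) L) (Kseq : ℕ → ℕ)
    (hle : ∀ i : Fin m, Kseq ((i : ℕ) + 1) + (Kseq (i : ℕ) - Kseq ((i : ℕ) + 1)) ≤ K)
    (msg : ∀ i : Fin m, Fin n → Fin (Kseq (i : ℕ) - Kseq ((i : ℕ) + 1)) → L)
    (j : Fin n) : Fin N → L :=
  fun x => ∑ i : Fin m, ∑ y : Fin (Kseq (i : ℕ) - Kseq ((i : ℕ) + 1)),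
    msg i j y * G x ⟨Kseq ((i : ℕ) + 1) + (y : ℕ), by
      have h1 := hle i
      have h2 := y.isLt
      omega⟩

/-- Multilevel construction of multishot rank-metric codes: if every nonzero element
of `ℛ_i` (span of the first `K_i` columns of `G`) has rank weight at least `D_i`, and
the outer component code `ℋ_i` has minimum Hamming distance at least `h_i`, then any
two distinct encoded words are at extended rank distance at least
`min {D_i · h_i : 0 ≤ i < m}`. -/
theorem multilevel_rank_distance_bound
    {F L : Type*} [Field F] [Field L] [Algebra F L] [Fintype F] [Fintype L]
    [FiniteDimensional F L]
    (N K n m : ℕ) (hN : 0 < N) (hK : 0 < K) (hn : 0 < n) (hm : 0 < m)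
    (G : Matrix (Fin N) (Fin K) L) (hG : LinearIndependent L Gᵀ)
    (Kseq : ℕ → ℕ) (hK0 : Kseq 0 = K) (hKm : Kseq m = 0)
    (hdec : ∀ i, i < m → Kseq (i + 1) < Kseq i)
    (hle : ∀ i : Fin m, Kseq ((i : ℕ) + 1) + (Kseq (i : ℕ) - Kseq ((i : ℕ) + 1)) ≤ K)
    (D h : ℕ → ℕ)
    (hD : ∀ i : Fin m,
      ∀ u ∈ Submodule.span L (Gᵀ '' {k : Fin K | (k : ℕ) < Kseq (i : ℕ)}),
        u ≠ 0 → D i ≤ rankWeight F u)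
    (ℋ : ∀ i : Fin m, Set (Fin n → Fin (Kseq (i : ℕ) - Kseq ((i : ℕ) + 1)) → L))
    (hH : ∀ i : Fin m, ∀ c ∈ ℋ i, ∀ c' ∈ ℋ i, c ≠ c' →
      h i ≤ (Finset.univ.filter fun j : Fin n => c j ≠ c' j).card)
    (msg msg' : ∀ i : Fin m, Fin n → Fin (Kseq (i : ℕ) - Kseq ((i : ℕ) + 1)) → L)
    (hmsg : ∀ i, msg i ∈ ℋ i) (hmsg' : ∀ i, msg' i ∈ ℋ i) (hne : msg ≠ msg') :
    (Finset.range m).inf' (Finset.nonempty_range_iff.mpr hm.ne') (fun i => D i * h i) ≤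
      ∑ j : Fin n,
        rankWeight F (multilevelEncode G Kseq hle msg' j - multilevelEncode G Kseq hle msg j) := by
  classical
  -- monotonicity of `Kseq` on `[0, m]`
  have hmono : ∀ a b : ℕ, a ≤ b → b ≤ m → Kseq b ≤ Kseq a := by
    intro a b hab hbm
    induction b with
    | zero =>
        have : a = 0 := Nat.le_zero.mp hab
        simp [this]
    | succ b ih =>
        rcases Nat.lt_or_ge a (b + 1) with hlt | hge
        · exact le_trans (le_of_lt (hdec b (by omega))) (ih (by omega) (by omega))
        · have : a = b + 1 := by omega
          simp [this]
  -- the minimal differing level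
  have hex : ∃ i : ℕ, ∃ hi : i < m, msg ⟨i, hi⟩ ≠ msg' ⟨i, hi⟩ := by
    by_contra hc
    push_neg at hc
    exact hne (funext fun i => hc i.val i.isLt)
  set i0n := Nat.find hex with hi0def
  obtain ⟨hi0m, hne0⟩ := Nat.find_spec hex
  set i₀ : Fin m := ⟨i0n, hi0m⟩ with hi₀def
  have hmin : ∀ i : Fin m, (i : ℕ) < i0n → msg i = msg' i := by
    intro i hi
    by_contra hc
    exact Nat.find_min hex hi ⟨i.isLt, hc⟩
  -- the injective column-index map
  let e : (Σ i : Fin m, Fin (Kseq (i : ℕ) - Kseq ((i : ℕ) + 1))) → Fin K :=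
    fun p => ⟨Kseq ((p.1 : ℕ) + 1) + (p.2 : ℕ), by
      have h1 := hle p.1
      have h2 := p.2.isLt
      omega⟩
  have he : Function.Injective e := by
    rintro ⟨i, y⟩ ⟨i', y'⟩ hpq
    have hval : Kseq ((i : ℕ) + 1) + (y : ℕ) = Kseq ((i' : ℕ) + 1) + (y' : ℕ) := by
      simpa [e] using congrArg Fin.val hpq
    have hy := y.isLt
    have hy' := y'.isLt
    have him := i.isLt
    have him' := i'.isLt
    have hii' : (i : ℕ) = (i' : ℕ) := by
      by_contra hne'
      rcases Nat.lt_or_ge (i : ℕ) (i' : ℕ) with hlt | hge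
      · have h1 : Kseq (i' : ℕ) ≤ Kseq ((i : ℕ) + 1) := hmono _ _ (by omega) (by omega)
        have h2 : Kseq ((i' : ℕ) + 1) < Kseq (i' : ℕ) := hdec _ him'
        omega
      · have hlt : (i' : ℕ) < (i : ℕ) := by omega
        have h1 : Kseq (i : ℕ) ≤ Kseq ((i' : ℕ) + 1) := hmono _ _ (by omega) (by omega)
        have h2 : Kseq ((i : ℕ) + 1) < Kseq (i : ℕ) := hdec _ him
        omega
    have hii : i = i' := Fin.ext hii'
    subst hii
    have hyy : (y : ℕ) = (y' : ℕ) := by omega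
    exact congrArg (Sigma.mk i) (Fin.ext hyy)
  -- the codeword difference as a sigma-indexed linear combination of columns
  have hdiff : ∀ j : Fin n,
      multilevelEncode G Kseq hle msg' j - multilevelEncode G Kseq hle msg j
        = ∑ p : Σ i : Fin m, Fin (Kseq (i : ℕ) - Kseq ((i : ℕ) + 1)),
            (msg' p.1 j p.2 - msg p.1 j p.2) • Gᵀ (e p) := by
    intro j
    funext x
    simp only [Pi.sub_apply, multilevelEncode, Finset.sum_apply, Pi.smul_apply,
      transpose_apply, smul_eq_mul]
    rw [← Finset.sum_sub_distrib, ← Finset.univ_sigma_univ, Finset.sum_sigma]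
    refine Finset.sum_congr rfl fun i _ => ?_
    rw [← Finset.sum_sub_distrib]
    refine Finset.sum_congr rfl fun y _ => ?_
    rw [sub_mul]
  -- membership in ℛ_{i₀}
  have hmem : ∀ j : Fin n,
      multilevelEncode G Kseq hle msg' j - multilevelEncode G Kseq hle msg j
        ∈ Submodule.span L (Gᵀ '' {k : Fin K | (k : ℕ) < Kseq (i₀ : ℕ)}) := by
    intro j
    rw [hdiff j]
    refine Submodule.sum_mem _ ?_
    rintro ⟨i, y⟩ -
    by_cases hcase : (i : ℕ) < i0n
    · have heq : msg i = msg' i := hmin i hcase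
      simp [heq]
    · refine Submodule.smul_mem _ _ (Submodule.subset_span ?_)
      refine ⟨e ⟨i, y⟩, ?_, rfl⟩
      simp only [Set.mem_setOf_eq]
      have h1 : Kseq (i : ℕ) ≤ Kseq i0n := hmono i0n (i : ℕ) (by omega) (le_of_lt i.isLt)
      have h2 := hdec (i : ℕ) i.isLt
      have h3 := y.isLt
      show Kseq ((i : ℕ) + 1) + (y : ℕ) < Kseq i0n
      omega
  -- the set of differing coordinates
  set S : Finset (Fin n) := Finset.univ.filter fun j : Fin n => msg i₀ j ≠ msg' i₀ j with hSdef
  have hScard : h i0n ≤ S.card := hH i₀ (msg i₀) (hmsg i₀) (msg' i₀) (hmsg' i₀) hne0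
  -- nonvanishing on differing coordinates
  have hnzero : ∀ j ∈ S,
      multilevelEncode G Kseq hle msg' j - multilevelEncode G Kseq hle msg j ≠ 0 := by
    intro j hj hzero
    have hli : LinearIndependent L (Gᵀ ∘ e) := hG.comp e he
    rw [hdiff j] at hzero
    have hall := Fintype.linearIndependent_iff.mp hli
      (fun p => msg' p.1 j p.2 - msg p.1 j p.2) (by simpa [Function.comp] using hzero)
    have hjS : msg i₀ j ≠ msg' i₀ j := by
      simpa [hSdef] using hj
    apply hjS
    funext y
    have := hall ⟨i₀, y⟩
    have heq : msg' i₀ j y - msg i₀ j y = 0 := this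
    exact (sub_eq_zero.mp heq).symm
  -- rank weight bound on differing coordinates
  have key : ∀ j ∈ S, D i0n ≤ rankWeight F
      (multilevelEncode G Kseq hle msg' j - multilevelEncode G Kseq hle msg j) := by
    intro j hj
    exact hD i₀ _ (hmem j) (hnzero j hj)
  calc (Finset.range m).inf' (Finset.nonempty_range_iff.mpr hm.ne') (fun i => D i * h i)
      ≤ D i0n * h i0n := Finset.inf'_le _ (Finset.mem_range.mpr hi0m)
    _ ≤ D i0n * S.card := Nat.mul_le_mul_left _ hScard
    _ = ∑ _j ∈ S, D i0n := by rw [Finset.sum_const, smul_eq_mul, mul_comm]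
    _ ≤ ∑ j ∈ S, rankWeight F
          (multilevelEncode G Kseq hle msg' j - multilevelEncode G Kseq hle msg j) :=
        Finset.sum_le_sum key
    _ ≤ ∑ j : Fin n, rankWeight F
          (multilevelEncode G Kseq hle msg' j - multilevelEncode G Kseq hle msg j) :=
        Finset.sum_le_sum_of_subset (Finset.filter_subset _ _)
end
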